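/- arXiv:1011.1917 — 5 statements merged into one kernel-verified Lean document; each statement's English description precedes it below -/
import Mathlib

section
/- Let Γ be a simple polygon, F a finite set of guards covering the boundary of Γ but not all of Γ, R the hidden region, and R₀ a connected component of R. For every line ℓ supporting a boundary segment of the closure of R₀, there is a guard in F lying on ℓ. -/
open Set

noncomputable section

/-- Points of the Euclidean plane. -/
abbrev Pt : Type := EuclideanSpace ℝ (Fin 2)

/-- A simple polygon: a compact region of the plane bounded by a simple closed
polygonal curve.  Vertices are indexed by `ℤ`, periodically with period `n`. -/
structure SimplePolygon where
  carrier : Set Pt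
  n : ℕ
  three_le : 3 ≤ n
  vertex : ℤ → Pt
  periodic : ∀ i : ℤ, vertex (i + n) = vertex i
  vertex_inj : ∀ i j : ℤ, 0 ≤ i → i < n → 0 ≤ j → j < n → vertex i = vertex j → i = j
  compact : IsCompact carrier
  connected : IsConnected carrier
  regular : carrier = closure (interior carrier)
  boundary_eq : frontier carrier = ⋃ i : ℤ, segment ℝ (vertex i) (vertex (i + 1))
  adj_edges : ∀ i j : ℤ, (n : ℤ) ∣ (j - (i + 1)) → ¬ (n : ℤ) ∣ (j - i) →
    segment ℝ (vertex i) (vertex (i + 1)) ∩ segment ℝ (vertex j) (vertex (j + 1)) = {vertex j}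
  nonadj_edges : ∀ i j : ℤ, ¬ (n : ℤ) ∣ (j - i) → ¬ (n : ℤ) ∣ (j - (i + 1)) →
    ¬ (n : ℤ) ∣ (i - (j + 1)) →
    Disjoint (segment ℝ (vertex i) (vertex (i + 1))) (segment ℝ (vertex j) (vertex (j + 1)))

/-- `A`, `B` span a (maximal) boundary segment of the set `R`. -/
def IsBoundarySegment (R : Set Pt) (A B : Pt) : Prop :=
  A ≠ B ∧ segment ℝ A B ⊆ frontier R ∧
  ∀ A' B' : Pt, segment ℝ A B ⊆ segment ℝ A' B' → segment ℝ A' B' ⊆ frontier R →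
    segment ℝ A' B' = segment ℝ A B

/-- `ℓ` is a support line of `R`: a line containing a boundary segment of the closure of `R`. -/
def IsSupportLine (R : Set Pt) (ℓ : AffineSubspace ℝ Pt) : Prop :=
  ∃ A B : Pt, IsBoundarySegment (closure R) A B ∧ ℓ = affineSpan ℝ ({A, B} : Set Pt)

/-- Two regions are adjacent when they share a common boundary edge
(a nondegenerate segment). -/
def AdjacentRegions (R R' : Set Pt) : Prop :=
  R ≠ R' ∧ ∃ C D : Pt, C ≠ D ∧ segment ℝ C D ⊆ closure R ∩ closure R'

namespace SimplePolygon

variable (Γ : SimplePolygon)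

/-- `G` sees `A`: the segment `GA` is contained in the polygon. -/
def Sees (G A : Pt) : Prop := segment ℝ G A ⊆ Γ.carrier

/-- The guard set `F` (visually) covers the set `S`. -/
def Covers (F S : Set Pt) : Prop := ∀ A ∈ S, ∃ G ∈ F, Γ.Sees G A

/-- The view of a point `P`: all points of the polygon seen by `P`. -/
def View (P : Pt) : Set Pt := {A | A ∈ Γ.carrier ∧ Γ.Sees P A}

/-- The hidden region of a guard configuration `F`: points of the polygon seen by no guard. -/
def Hidden (F : Set Pt) : Set Pt := {A | A ∈ Γ.carrier ∧ ∀ G ∈ F, ¬ Γ.Sees G A}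

/-- The polygon is normal: every configuration of guards covering the walls covers everything. -/
def Normal : Prop :=
  ∀ F : Set Pt, F ⊆ Γ.carrier → Γ.Covers F (frontier Γ.carrier) → Γ.Covers F Γ.carrier

/-- The polygon is normal with respect to `A`: every configuration of guards inside `A`
covering the walls covers everything. -/
def NormalWrt (A : Set Pt) : Prop :=
  ∀ F : Set Pt, F ⊆ A → Γ.Covers F (frontier Γ.carrier) → Γ.Covers F Γ.carrier

/-- The corner at `vertex i` is reflex (interior angle exceeding 180°): points slightly
displaced from the vertex in the direction bisecting the (undirected) corner angle lie
outside the polygon. -/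
def IsReflexCorner (i : ℤ) : Prop :=
  ∃ δ > (0 : ℝ), ∀ ε : ℝ, 0 < ε → ε < δ →
    Γ.vertex i + ε • ((Γ.vertex (i - 1) - Γ.vertex i) + (Γ.vertex (i + 1) - Γ.vertex i)) ∉
      Γ.carrier

/-- The set of (indices in one period of) reflex corners of the polygon. -/
def reflexCorners : Set ℤ := {i : ℤ | 0 ≤ i ∧ i < Γ.n ∧ Γ.IsReflexCorner i}

/-- `(P, i)` is a feasible pair: `vertex i` is a reflex corner visible from `P` and the two
walls at the corner lie (weakly) on the same side of the line through `P` and `vertex i`. -/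
def IsFeasible (P : Pt) (i : ℤ) : Prop :=
  Γ.IsReflexCorner i ∧ P ≠ Γ.vertex i ∧ Γ.Sees P (Γ.vertex i) ∧
  ∃ f : Pt →ₗ[ℝ] ℝ, f ≠ 0 ∧ f (Γ.vertex i - P) = 0 ∧
    0 ≤ f (Γ.vertex (i - 1) - P) ∧ 0 ≤ f (Γ.vertex (i + 1) - P)

/-- `w` is a window of `P`: the segment from a reflex corner `C = vertex i` of a feasible
pair `(P, i)` to the farthest boundary point visible from `P` on the ray `P C` beyond `C`. -/
def IsWindow (P : Pt) (w : Set Pt) : Prop :=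
  ∃ i : ℤ, ∃ W : Pt, Γ.IsFeasible P i ∧
    (∃ t : ℝ, 0 ≤ t ∧ W = Γ.vertex i + t • (Γ.vertex i - P)) ∧
    W ∈ frontier Γ.carrier ∧ Γ.Sees P W ∧
    (∀ W' : Pt, (∃ t : ℝ, 0 ≤ t ∧ W' = Γ.vertex i + t • (Γ.vertex i - P)) →
      W' ∈ frontier Γ.carrier → Γ.Sees P W' → dist P W' ≤ dist P W) ∧
    w = segment ℝ (Γ.vertex i) W

/-- The union of all windows of points of `A`. -/
def windows (A : Set Pt) : Set Pt := ⋃₀ {w : Set Pt | ∃ P ∈ A, Γ.IsWindow P w}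

/-- The (interiors of the) visibility regions of the visibility decomposition of the polygon
with respect to `A`: connected components of the interior of the polygon with all windows
removed. -/
def regionInteriors (A : Set Pt) : Set (Set Pt) :=
  {R : Set Pt | ∃ x ∈ interior Γ.carrier \ Γ.windows A,
    R = connectedComponentIn (interior Γ.carrier \ Γ.windows A) x}

/-- `P` sees every point of `R`. -/
def SeesAll (P : Pt) (R : Set Pt) : Prop := ∀ x ∈ R, Γ.Sees P x

/-- `V(R)`: the set of points of `A` that see the (interior of the) region `R`. -/
def Vset (A R : Set Pt) : Set Pt := {P ∈ A | Γ.SeesAll P R}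

/-- `R` is a sink of the visibility decomposition with respect to `A`. -/
def IsSink (A R : Set Pt) : Prop :=
  R ∈ Γ.regionInteriors A ∧
  ∀ R' ∈ Γ.regionInteriors A, AdjacentRegions R R' → Γ.Vset A R ⊆ Γ.Vset A R'

end SimplePolygon

/-!
Suppose no guard lies on the line `ℓ = AB`. The hidden region is open, so no point of the
boundary segment `AB` of the closure of a hidden component is hidden: the segment is covered by
the finitely many closed sets of points seen by single guards, and by Baire one guard `G ∉ ℓ` sees
a whole subsegment `CD`, hence the whole triangle `GCD`. As the polygon has finitely many edges,
some point `M` of `CD` has a neighbourhood in which the boundary of the polygon lies on `ℓ`.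
The half-disc at `M` on the far side of `ℓ` contains the hidden points near `M` (the other side
lies in the triangle); being connected and disjoint from the boundary, it lies inside the polygon.
But then `G` sees every point near `M` through the triangle and this half-disc, while `M` is a
limit of hidden points.
-/

open Topology AffineMap

theorem notMem_of_mem_frontier_closure_connectedComponentIn {X : Type*} [TopologicalSpace X]
    [LocallyConnectedSpace X] {s : Set X} (hs : IsOpen s) {x y : X}
    (hy : y ∈ frontier (closure (connectedComponentIn s x))) : y ∉ s := by
  intro hys
  have hnhds : connectedComponentIn s y ∈ 𝓝 y :=
    hs.connectedComponentIn.mem_nhds (mem_connectedComponentIn hys)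
  obtain ⟨z, hzy, hzx⟩ := mem_closure_iff_nhds.mp (isClosed_closure.frontier_subset hy) _ hnhds
  rw [connectedComponentIn_eq hzx, ← connectedComponentIn_eq hzy] at hy
  exact hy.2 (interior_mono subset_closure (mem_interior_iff_mem_nhds.mpr hnhds))

theorem IsPreconnected.subset_of_disjoint_frontier {X : Type*} [TopologicalSpace X]
    {s t : Set X} (hs : IsPreconnected s) (hst : (s ∩ t).Nonempty)
    (hfr : Disjoint s (frontier t)) : s ⊆ t := by
  have hcover : s ⊆ interior t ∪ (closure t)ᶜ := fun z hz => by
    by_contra h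
    simp only [mem_union, mem_compl_iff, not_or, not_not] at h
    exact disjoint_left.mp hfr hz ⟨h.2, h.1⟩
  obtain ⟨z, hzs, hzt⟩ := hst
  refine (hs.subset_left_of_subset_union isOpen_interior isClosed_closure.isOpen_compl
    (disjoint_compl_right.mono_left interior_subset_closure) hcover ⟨z, hzs, ?_⟩).trans
    interior_subset
  exact (hcover hzs).resolve_right (not_not.mpr (subset_closure hzt))

section Segment

variable {E : Type*} [AddCommGroup E] [Module ℝ E]

theorem segment_subset_union_of_mem {x y z : E} (hy : y ∈ segment ℝ x z) :
    segment ℝ x z ⊆ segment ℝ x y ∪ segment ℝ y z := by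
  intro w hw
  rw [segment_eq_image_lineMap] at hy hw
  obtain ⟨s, hs, rfl⟩ := hy
  obtain ⟨t, ht, rfl⟩ := hw
  rw [mem_union, segment_eq_image_lineMap, segment_eq_image_lineMap]
  rcases le_total t s with hts | hst
  · left
    rcases hs.1.eq_or_lt with rfl | hs0
    · obtain rfl : t = 0 := le_antisymm hts ht.1
      exact ⟨0, left_mem_Icc.mpr zero_le_one, by simp⟩
    refine ⟨t / s, ⟨div_nonneg ht.1 hs.1, div_le_one_of_le₀ hts hs.1⟩, ?_⟩
    rw [lineMap_lineMap_right, div_mul_cancel₀ t hs0.ne']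
  · right
    rcases hs.2.eq_or_lt with rfl | hs1
    · obtain rfl : t = 1 := le_antisymm ht.2 hst
      exact ⟨1, right_mem_Icc.mpr zero_le_one, by simp⟩
    refine ⟨(t - s) / (1 - s), ⟨div_nonneg (by linarith) (by linarith),
      div_le_one_of_le₀ (by linarith [ht.2]) (by linarith)⟩, ?_⟩
    rw [lineMap_lineMap_left]
    congr 1
    field_simp
    ring

theorem segment_subset_or_subsingleton_inter (L : AffineSubspace ℝ E) (P Q : E) :
    segment ℝ P Q ⊆ L ∨ (segment ℝ P Q ∩ L).Subsingleton := by
  refine or_iff_not_imp_right.mpr fun h => ?_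
  obtain ⟨p, ⟨hpPQ, hpL⟩, q, ⟨hqPQ, hqL⟩, hpq⟩ := not_subsingleton_iff.mp h
  have hcol := collinear_insert_insert_of_mem_affineSpan_pair
    (mem_segment_iff_wbtw.mp hpPQ).mem_affineSpan (mem_segment_iff_wbtw.mp hqPQ).mem_affineSpan
  have hpqL : line[ℝ, p, q] ≤ L := affineSpan_pair_le_of_mem_of_mem hpL hqL
  exact L.convex.segment_subset
    (hpqL (hcol.mem_affineSpan_of_mem_of_ne (by simp) (by simp) (by simp) hpq))
    (hpqL (hcol.mem_affineSpan_of_mem_of_ne (by simp) (by simp) (by simp) hpq))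

variable [TopologicalSpace E] [IsTopologicalAddGroup E] [ContinuousSMul ℝ E]

theorem isClosed_segment [T2Space E] (P Q : E) : IsClosed (segment ℝ P Q) := by
  rw [segment_eq_image_lineMap]
  exact (isCompact_Icc.image lineMap_continuous).isClosed

theorem isClosed_setOf_segment_subset {s : Set E} (hs : IsClosed s) (x : E) :
    IsClosed {y | segment ℝ x y ⊆ s} := by
  have h : {y | segment ℝ x y ⊆ s} = ⋂ t ∈ Icc (0 : ℝ) 1, (fun y => lineMap x y t) ⁻¹' s := by
    ext y
    simp only [mem_ofPred_eq, segment_eq_image_lineMap, image_subset_iff, mem_iInter₂, mem_preimage]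
    rfl
  rw [h]
  refine isClosed_biInter fun t _ => hs.preimage ?_
  simp only [lineMap_apply_module]
  fun_prop

theorem exists_segment_subset_of_segment_subset_iUnion {ι : Type*} [Countable ι]
    {f : ι → Set E} (hf : ∀ i, IsClosed (f i)) {P Q : E} (hPQ : P ≠ Q)
    (hcov : segment ℝ P Q ⊆ ⋃ i, f i) :
    ∃ i, ∃ C D : E, C ≠ D ∧ segment ℝ C D ⊆ segment ℝ P Q ∧ segment ℝ C D ⊆ f i := by
  let g : Option ι → Set ℝ := fun o => o.elim (Ioo 0 1)ᶜ fun i => lineMap P Q ⁻¹' f i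
  have hg : ∀ o, IsClosed (g o) := by
    rintro (_ | i)
    exacts [isOpen_Ioo.isClosed_compl, (hf i).preimage lineMap_continuous]
  have hgcov : ⋃ o, g o = univ := by
    refine eq_univ_of_forall fun t => ?_
    by_cases ht : t ∈ Ioo (0 : ℝ) 1
    · obtain ⟨i, hi⟩ := mem_iUnion.mp <| hcov <| by
        rw [segment_eq_image_lineMap]; exact mem_image_of_mem _ (Ioo_subset_Icc_self ht)
      exact mem_iUnion.mpr ⟨some i, hi⟩
    · exact mem_iUnion.mpr ⟨none, ht⟩
  obtain ⟨t, ht01, ht⟩ := (dense_iUnion_interior_of_closed hg hgcov).inter_open_nonempty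
    (Ioo 0 1) isOpen_Ioo (nonempty_Ioo.mpr one_pos)
  obtain ⟨_ | i, hti⟩ := mem_iUnion.mp ht
  · exact absurd ht01 (interior_subset hti)
  have hnhds : interior (g (some i)) ∩ Ioo 0 1 ∈ 𝓝 t :=
    Filter.inter_mem (isOpen_interior.mem_nhds hti) (isOpen_Ioo.mem_nhds ht01)
  obtain ⟨l, u, htlu, hlu⟩ := mem_nhds_iff_exists_Ioo_subset.mp hnhds
  have hIcc : Icc ((l + t) / 2) ((t + u) / 2) ⊆ Ioo l u :=
    Icc_subset_Ioo (by linarith [htlu.1]) (by linarith [htlu.2])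
  have hseg : segment ℝ (lineMap P Q ((l + t) / 2)) (lineMap P Q ((t + u) / 2) : E) =
      lineMap P Q '' Icc ((l + t) / 2) ((t + u) / 2) := by
    rw [← image_segment, segment_eq_Icc (by linarith [htlu.1, htlu.2])]
  refine ⟨i, _, _, (lineMap_injective ℝ hPQ).ne
    (show (l + t) / 2 ≠ (t + u) / 2 by linarith [htlu.1, htlu.2]), ?_, ?_⟩
  · rw [hseg, segment_eq_image_lineMap]
    exact image_mono fun s hs => Ioo_subset_Icc_self (hlu (hIcc hs)).2
  · rw [hseg, image_subset_iff]
    exact fun s hs => interior_subset (hlu (hIcc hs)).1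

theorem exists_mem_openSegment_nhds_inter_sUnion_subset [T2Space E] {S : Set (Set E)} (hS : S.Finite)
    (hseg : ∀ e ∈ S, ∃ P Q, e = segment ℝ P Q) {C D : E} (hCD : C ≠ D) :
    ∃ M ∈ openSegment ℝ C D, ∃ U ∈ 𝓝 M, ⋃₀ S ∩ U ⊆ line[ℝ, C, D] := by
  set L := line[ℝ, C, D]
  set S' := {e ∈ S | ¬ e ⊆ L}
  have hS' : S'.Finite := hS.subset (sep_subset _ _)
  have hcross : (⋃ e ∈ S', e ∩ L).Finite := hS'.biUnion fun e he => by
    obtain ⟨P, Q, rfl⟩ := hseg e he.1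
    exact ((segment_subset_or_subsingleton_inter L P Q).resolve_left he.2).finite
  have hinf : (openSegment ℝ C D).Infinite := by
    rw [openSegment_eq_image_lineMap]
    exact (Ioo_infinite zero_lt_one).image (lineMap_injective ℝ hCD).injOn
  obtain ⟨M, hM, hMcross⟩ := (hinf.sdiff hcross).nonempty
  have hML : M ∈ L := L.convex.openSegment_subset (left_mem_affineSpan_pair ℝ C D)
    (right_mem_affineSpan_pair ℝ C D) hM
  have hclosed : IsClosed (⋃₀ S') := by
    rw [sUnion_eq_biUnion]
    refine hS'.isClosed_biUnion fun e he => ?_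
    obtain ⟨P, Q, rfl⟩ := hseg e he.1
    exact isClosed_segment P Q
  refine ⟨M, hM, (⋃₀ S')ᶜ, hclosed.isOpen_compl.mem_nhds fun ⟨e, he, hMe⟩ =>
    hMcross (mem_biUnion he ⟨hMe, hML⟩), ?_⟩
  rintro z ⟨⟨e, he, hze⟩, hz⟩
  by_contra hzL
  exact hz ⟨e, ⟨he, fun h => hzL (h hze)⟩, hze⟩

end Segment

theorem exists_affineBasis_of_notMem_affineSpan_pair {E : Type*} [AddCommGroup E] [Module ℝ E]
    [FiniteDimensional ℝ E] (hE : Module.finrank ℝ E = 2) {G C D : E} (hCD : C ≠ D)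
    (hG : G ∉ line[ℝ, C, D]) : ∃ b : AffineBasis (Fin 3) ℝ E, b 0 = G ∧ b 1 = C ∧ b 2 = D := by
  have hind : AffineIndependent ℝ ![G, C, D] := affineIndependent_iff_not_collinear_set.mpr
    fun h => hG (h.mem_affineSpan_of_mem_of_ne (by simp) (by simp) (by simp) hCD)
  have htop : affineSpan ℝ (range ![G, C, D]) = ⊤ := by
    rw [hind.affineSpan_eq_top_iff_card_eq_finrank_add_one, hE, Fintype.card_fin]
  exact ⟨⟨![G, C, D], hind, htop⟩, rfl, rfl, rfl⟩

theorem AffineBasis.coord_zero_eq_zero_of_mem_affineSpan_pair {k V P : Type*} [Ring k]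
    [AddCommGroup V] [Module k V] [AddTorsor V P] (b : AffineBasis (Fin 3) k P) {z : P}
    (hz : z ∈ line[k, b 1, b 2]) : b.coord 0 z = 0 := by
  obtain ⟨t, rfl⟩ := mem_affineSpan_pair_iff_exists_lineMap_eq.mp hz
  simp [apply_lineMap, b.coord_apply]

namespace SimplePolygon

variable (Γ : SimplePolygon)

def edge (i : ℤ) : Set Pt := segment ℝ (Γ.vertex i) (Γ.vertex (i + 1))

theorem edge_emod (i : ℤ) : Γ.edge (i % Γ.n) = Γ.edge i := by
  have h : ∀ j, Γ.vertex (j - (i / Γ.n) * Γ.n) = Γ.vertex j :=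
    fun j => Function.Periodic.sub_int_mul_eq Γ.periodic _
  rw [edge, edge, ← h i, ← h (i + 1), Int.emod_def]
  congr 2 <;> ring_nf

theorem finite_range_edge : (range Γ.edge).Finite := by
  refine ((finite_Ico 0 (Γ.n : ℤ)).image Γ.edge).subset ?_
  rintro _ ⟨i, rfl⟩
  have hn : (0 : ℤ) < Γ.n := by have := Γ.three_le; omega
  exact ⟨i % Γ.n, ⟨Int.emod_nonneg i hn.ne', Int.emod_lt_of_pos i hn⟩, Γ.edge_emod i⟩

theorem frontier_eq_sUnion_range_edge : frontier Γ.carrier = ⋃₀ range Γ.edge := by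
  rw [Γ.boundary_eq, sUnion_range]
  rfl

theorem isOpen_hidden {F : Set Pt} (hF : F.Finite) (hwalls : Γ.Covers F (frontier Γ.carrier)) :
    IsOpen (Γ.Hidden F) := by
  have h : Γ.Hidden F = interior Γ.carrier ∩ ⋂ G ∈ F, {A | Γ.Sees G A}ᶜ := by
    ext A
    constructor
    · rintro ⟨hA, hG⟩
      refine ⟨by_contra fun hint => ?_, mem_iInter₂.mpr hG⟩
      obtain ⟨G, hGF, hsee⟩ := hwalls A ⟨subset_closure hA, hint⟩
      exact hG G hGF hsee
    · rintro ⟨hA, hG⟩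
      exact ⟨interior_subset hA, mem_iInter₂.mp hG⟩
  rw [h]
  exact isOpen_interior.inter <| hF.isOpen_biInter fun G _ =>
    (isClosed_setOf_segment_subset Γ.compact.isClosed G).isOpen_compl

theorem covers_frontier_closure_connectedComponentIn_hidden {F : Set Pt} (hF : F.Finite)
    (hwalls : Γ.Covers F (frontier Γ.carrier)) (x : Pt) :
    Γ.Covers F (frontier (closure (connectedComponentIn (Γ.Hidden F) x))) := by
  intro y hy
  have hyΓ : y ∈ Γ.carrier := closure_minimal (fun z hz => hz.1) Γ.compact.isClosed <|
    closure_mono (connectedComponentIn_subset _ _) (isClosed_closure.frontier_subset hy)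
  by_contra! h
  exact notMem_of_mem_frontier_closure_connectedComponentIn (Γ.isOpen_hidden hF hwalls) hy ⟨hyΓ, h⟩

variable {Γ}

theorem sees_of_mem_convexHull {G C D p : Pt} (hsees : ∀ z ∈ segment ℝ C D, Γ.Sees G z)
    (hp : p ∈ convexHull ℝ {G, C, D}) : Γ.Sees G p := by
  rw [convexHull_insert (insert_nonempty C {D}), convexHull_pair, mem_convexJoin] at hp
  obtain ⟨a, ha, q, hq, hpq⟩ := hp
  rw [mem_singleton_iff.mp ha] at hpq
  exact ((convex_segment G q).segment_subset (left_mem_segment ℝ G q) hpq).trans (hsees q hq)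

theorem sees_of_mem_segment {G w z : Pt} (hw : w ∈ segment ℝ G z) (hGw : Γ.Sees G w)
    (hwz : segment ℝ w z ⊆ Γ.carrier) : Γ.Sees G z :=
  (segment_subset_union_of_mem hw).trans (union_subset hGw hwz)

theorem sees_of_coord_nonneg {b : AffineBasis (Fin 3) ℝ Pt}
    (hsees : ∀ z ∈ segment ℝ (b 1) (b 2), Γ.Sees (b 0) z) {p : Pt}
    (hp : ∀ i, 0 ≤ b.coord i p) : Γ.Sees (b 0) p := by
  have hrange : range b = {b 0, b 1, b 2} := by ext; simp [Fin.exists_fin_succ, eq_comm]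
  exact sees_of_mem_convexHull hsees (by rw [← hrange, b.convexHull_eq_nonneg_coord]; exact hp)

theorem notMem_closure_setOf_not_sees_of_lineMap_mem {G M : Pt} {B W : Set Pt} (hB : IsOpen B)
    (hBconv : Convex ℝ B) (hBΓ : B ⊆ Γ.carrier) (hMB : M ∈ B) (hW : IsOpen W)
    (hWseen : Γ.SeesAll G W) {s : ℝ} (hs : s ∈ Icc (0 : ℝ) 1) (hsM : lineMap G M s ∈ B ∩ W) :
    M ∉ closure {z | z ∈ Γ.carrier ∧ ¬ Γ.Sees G z} := by
  have hhom : Continuous fun z => lineMap G z s := by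
    simp only [lineMap_apply_module]
    fun_prop
  have hV : B ∩ (fun z => lineMap G z s) ⁻¹' (B ∩ W) ∈ 𝓝 M :=
    (hB.inter (hhom.isOpen_preimage _ (hB.inter hW))).mem_nhds ⟨hMB, hsM⟩
  intro hMcl
  obtain ⟨z, ⟨hzB, hwB, hwW⟩, -, hz⟩ := mem_closure_iff_nhds.mp hMcl _ hV
  refine hz (sees_of_mem_segment ?_ (hWseen _ hwW) ((hBconv.segment_subset hwB hzB).trans hBΓ))
  rw [segment_eq_image_lineMap]
  exact ⟨s, hs, rfl⟩

theorem notMem_closure_setOf_not_sees (b : AffineBasis (Fin 3) ℝ Pt)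
    (hsees : ∀ z ∈ segment ℝ (b 1) (b 2), Γ.Sees (b 0) z) {M : Pt}
    (hM : M ∈ openSegment ℝ (b 1) (b 2)) {U : Set Pt} (hU : U ∈ 𝓝 M)
    (hfr : frontier Γ.carrier ∩ U ⊆ line[ℝ, b 1, b 2]) :
    M ∉ closure {z | z ∈ Γ.carrier ∧ ¬ Γ.Sees (b 0) z} := by
  set c := b.coord
  have hcont : ∀ i, Continuous (c i) := fun i => (c i).continuous_of_finiteDimensional
  have hM0 : c 0 M = 0 := b.coord_zero_eq_zero_of_mem_affineSpan_pair <|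
    (affineSpan ℝ _).convex.openSegment_subset (left_mem_affineSpan_pair ℝ _ _)
      (right_mem_affineSpan_pair ℝ _ _) hM
  have hM12 : 0 < c 1 M ∧ 0 < c 2 M := by
    rw [openSegment_eq_image_lineMap] at hM
    obtain ⟨t, ht, rfl⟩ := hM
    simp [c, apply_lineMap, b.coord_apply, lineMap_apply_ring, ht.1, ht.2]
  obtain ⟨r, hr, hball⟩ := Metric.mem_nhds_iff.mp <| Filter.inter_mem hU <|
    ((isOpen_lt continuous_const (hcont 1)).inter (isOpen_lt continuous_const (hcont 2))).mem_nhds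
      hM12
  set B := Metric.ball M r
  have hBseen : ∀ z ∈ B, 0 ≤ c 0 z → Γ.Sees (b 0) z := fun z hz h0 => by
    refine sees_of_coord_nonneg hsees fun i => ?_
    fin_cases i
    exacts [h0, (hball hz).2.1.le, (hball hz).2.2.le]
  intro hMcl
  obtain ⟨z₀, hz₀B, hz₀Γ, hz₀⟩ := mem_closure_iff_nhds.mp hMcl B (Metric.ball_mem_nhds M hr)
  have hz₀neg : c 0 z₀ < 0 := lt_of_not_ge fun h => hz₀ (hBseen z₀ hz₀B h)
  -- the part of `B` beyond the line meets the polygon and avoids its boundary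
  have hBneg : B ∩ {z | c 0 z < 0} ⊆ Γ.carrier :=
    ((convex_ball M r).inter ((convex_Iio 0).affine_preimage (c 0))).isPreconnected
      |>.subset_of_disjoint_frontier ⟨z₀, ⟨hz₀B, hz₀neg⟩, hz₀Γ⟩ <|
      disjoint_left.mpr fun z hz hzfr =>
        (b.coord_zero_eq_zero_of_mem_affineSpan_pair (hfr ⟨hzfr, (hball hz.1).1⟩)).not_lt hz.2
  have hBΓ : B ⊆ Γ.carrier := fun z hz => by
    by_cases h : 0 ≤ c 0 z
    · exact hBseen z hz h (right_mem_segment ℝ _ _)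
    · exact hBneg ⟨hz, not_le.mp h⟩
  have hlim : Filter.Tendsto (lineMap (b 0) M) (𝓝[<] (1 : ℝ)) (𝓝 M) :=
    ((lineMap_continuous (R := ℝ)).tendsto' 1 M (by simp)).mono_left nhdsWithin_le_nhds
  obtain ⟨s, hs, hsB⟩ := Filter.nonempty_of_mem <|
    Filter.inter_mem (Ioo_mem_nhdsLT zero_lt_one) (hlim (Metric.ball_mem_nhds M hr))
  refine notMem_closure_setOf_not_sees_of_lineMap_mem Metric.isOpen_ball (convex_ball M r) hBΓ
    (Metric.mem_ball_self hr) (Metric.isOpen_ball.inter (isOpen_lt continuous_const (hcont 0)))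
    (fun w hw => hBseen w hw.1 (le_of_lt hw.2)) (Ioo_subset_Icc_self hs) ⟨hsB, hsB, ?_⟩ hMcl
  simp [c, apply_lineMap, b.coord_apply, lineMap_apply_ring, hM0, hs.2]

end SimplePolygon

theorem guard_on_support_line_general (Γ : SimplePolygon) (F : Set Pt) (hFfin : F.Finite)
    (hwalls : Γ.Covers F (frontier Γ.carrier))
    (x : Pt)
    (ℓ : AffineSubspace ℝ Pt)
    (hℓ : IsSupportLine (connectedComponentIn (Γ.Hidden F) x) ℓ) :
    ∃ G ∈ F, G ∈ ℓ := by
  obtain ⟨A, B, ⟨hAB, hfrAB, -⟩, rfl⟩ := hℓ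
  by_contra! hnone
  have : Countable F := hFfin.countable.to_subtype
  obtain ⟨⟨G, hGF⟩, C, D, hCD, hCDAB, hsees⟩ := exists_segment_subset_of_segment_subset_iUnion
    (fun G : F => isClosed_setOf_segment_subset Γ.compact.isClosed G) hAB fun y hy => by
      obtain ⟨G, hG, h⟩ := Γ.covers_frontier_closure_connectedComponentIn_hidden hFfin hwalls x y
        (hfrAB hy)
      exact mem_iUnion.mpr ⟨⟨G, hG⟩, h⟩
  have hCDle : line[ℝ, C, D] ≤ line[ℝ, A, B] := affineSpan_pair_le_of_mem_of_mem
    (mem_segment_iff_wbtw.mp (hCDAB (left_mem_segment ℝ C D))).mem_affineSpan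
    (mem_segment_iff_wbtw.mp (hCDAB (right_mem_segment ℝ C D))).mem_affineSpan
  obtain ⟨b, rfl, rfl, rfl⟩ := exists_affineBasis_of_notMem_affineSpan_pair
    finrank_euclideanSpace_fin hCD fun h => hnone _ hGF (hCDle h)
  obtain ⟨M, hM, U, hU, hfr⟩ := exists_mem_openSegment_nhds_inter_sUnion_subset
    Γ.finite_range_edge (by rintro _ ⟨i, rfl⟩; exact ⟨_, _, rfl⟩) hCD
  rw [← Γ.frontier_eq_sUnion_range_edge] at hfr
  have hMclos : M ∈ closure (Γ.Hidden F) := closure_mono (connectedComponentIn_subset _ _)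
    (isClosed_closure.frontier_subset (hfrAB (hCDAB (openSegment_subset_segment ℝ _ _ hM))))
  exact Γ.notMem_closure_setOf_not_sees b hsees hM hU hfr <|
    closure_mono (t := {z | z ∈ Γ.carrier ∧ ¬ Γ.Sees (b 0) z}) (fun z hz => ⟨hz.1, hz.2 _ hGF⟩)
      hMclos

/-- every support line of a connected component of the hidden region
contains a guard. -/
theorem guard_on_support_line (Γ : SimplePolygon) (F : Set Pt) (hF : F ⊆ Γ.carrier) (hFfin : F.Finite)
    (hwalls : Γ.Covers F (frontier Γ.carrier)) (hnotall : ¬ Γ.Covers F Γ.carrier)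
    (x : Pt) (hx : x ∈ Γ.Hidden F)
    (ℓ : AffineSubspace ℝ Pt)
    (hℓ : IsSupportLine (connectedComponentIn (Γ.Hidden F) x) ℓ) :
    ∃ G ∈ F, G ∈ ℓ :=
  guard_on_support_line_general Γ F hFfin hwalls x ℓ hℓ
end
end

section
/- Every star polygon is normal: if there exists a point S ∈ Γ such that for every X ∈ Γ the segment SX lies in Γ, then any set of guards covering the boundary of Γ covers all of Γ. -/
open Set

noncomputable section

/-- every star polygon is normal. -/
theorem normal_of_star (Γ : SimplePolygon)
    (hstar : ∃ S ∈ Γ.carrier, ∀ X ∈ Γ.carrier, Γ.Sees S X) :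
    Γ.Normal := by
  obtain ⟨S, hS, hsee⟩ := hstar
  intro F hF hcov A hA
  have hclosed : IsClosed Γ.carrier := Γ.compact.isClosed
  -- find a boundary point B with A ∈ segment S B
  obtain ⟨B, hBf, hAB⟩ : ∃ B ∈ frontier Γ.carrier, A ∈ segment ℝ S B := by
    rcases eq_or_ne A S with rfl | hne
    · refine ⟨Γ.vertex 0, ?_, left_mem_segment ℝ _ _⟩
      rw [Γ.boundary_eq]
      exact mem_iUnion.2 ⟨0, left_mem_segment ℝ _ _⟩
    · set v : Pt := A - S with hv
      have hv0 : v ≠ 0 := sub_ne_zero.2 hne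
      set T : Set ℝ := {t : ℝ | S + t • v ∈ Γ.carrier} with hT
      have hT1 : (1 : ℝ) ∈ T := by
        simp only [hT, mem_setOf_eq, one_smul, hv]
        simpa using hA
      have hcont : Continuous fun t : ℝ => S + t • v := by continuity
      have hTclosed : IsClosed T := hclosed.preimage hcont
      have hTbdd : BddAbove T := by
        obtain ⟨r, hr⟩ := (Metric.isBounded_iff_subset_closedBall S).1 Γ.compact.isBounded
        refine ⟨r / ‖v‖, fun t ht => ?_⟩
        have h1 : S + t • v ∈ Metric.closedBall S r := hr ht
        have h2 : dist (S + t • v) S ≤ r := Metric.mem_closedBall.1 h1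
        have h3 : |t| * ‖v‖ ≤ r := by
          have : dist (S + t • v) S = ‖t • v‖ := by
            simp [dist_eq_norm]
          rw [this, norm_smul, Real.norm_eq_abs] at h2
          exact h2
        have hvpos : 0 < ‖v‖ := norm_pos_iff.2 hv0
        calc t ≤ |t| := le_abs_self t
          _ ≤ r / ‖v‖ := (le_div_iff₀ hvpos).2 h3
      have hTne : T.Nonempty := ⟨1, hT1⟩
      set t := sSup T with htdef
      have htT : t ∈ T := hTclosed.csSup_mem hTne hTbdd
      have ht1 : (1 : ℝ) ≤ t := le_csSup hTbdd hT1
      have htpos : (0 : ℝ) < t := lt_of_lt_of_le one_pos ht1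
      refine ⟨S + t • v, ?_, ?_⟩
      · refine ⟨subset_closure htT, fun hmem => ?_⟩
        -- not in interior: otherwise t + δ ∈ T contradicting sSup
        have hopen : IsOpen ((fun t : ℝ => S + t • v) ⁻¹' (interior Γ.carrier)) :=
          isOpen_interior.preimage hcont
        obtain ⟨ε, hε, hball⟩ := Metric.isOpen_iff.1 hopen t hmem
        have hmem2 : t + ε / 2 ∈ T := by
          have hb : t + ε / 2 ∈ Metric.ball t ε := by
            simp only [Metric.mem_ball, Real.dist_eq, add_sub_cancel_left]
            rw [abs_of_pos (half_pos hε)]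
            linarith
          have hin : S + (t + ε / 2) • v ∈ interior Γ.carrier := hball hb
          show S + (t + ε / 2) • v ∈ Γ.carrier
          exact interior_subset hin
        have := le_csSup hTbdd hmem2
        linarith
      · rw [segment_eq_image']
        refine ⟨1 / t, ⟨by positivity, by
          rw [div_le_one htpos]; exact ht1⟩, ?_⟩
        show S + (1 / t) • (S + t • v - S) = A
        rw [add_sub_cancel_left, smul_smul, one_div_mul_cancel (ne_of_gt htpos),
          one_smul, hv]
        abel
  -- the guard seeing B also sees A via the triangle S G B
  have hBc : B ∈ Γ.carrier := by
    rw [← hclosed.closure_eq]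
    exact hBf.1
  obtain ⟨G, hG, hGB⟩ := hcov B hBf
  have hhull : convexHull ℝ ({G, B, S} : Set Pt) ⊆ Γ.carrier := by
    have h1 : ({G, B, S} : Set Pt) = insert S {G, B} := by
      ext x; simp; tauto
    rw [h1, convexHull_insert ⟨G, by simp⟩, convexHull_pair]
    rintro x hx
    rw [mem_convexJoin] at hx
    obtain ⟨a, ha, z, hz, hx⟩ := hx
    rw [mem_singleton_iff] at ha
    subst ha
    exact hsee z (hGB hz) hx
  have hGh : G ∈ convexHull ℝ ({G, B, S} : Set Pt) :=
    subset_convexHull ℝ _ (by simp)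
  have hBh : B ∈ convexHull ℝ ({G, B, S} : Set Pt) :=
    subset_convexHull ℝ _ (by simp)
  have hSh : S ∈ convexHull ℝ ({G, B, S} : Set Pt) :=
    subset_convexHull ℝ _ (by simp)
  have hAh : A ∈ convexHull ℝ ({G, B, S} : Set Pt) :=
    (convex_convexHull ℝ _).segment_subset hSh hBh hAB
  refine ⟨G, hG, fun x hx => hhull ?_⟩
  exact (convex_convexHull ℝ _).segment_subset hGh hAh hx
end
end

section
/- Let Γ be a star polygon with kernel point S, let W be a boundary point of Γ, and let G ∈ Γ be a point that sees W. Then G sees every point of the segment SW. -/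
open Set

noncomputable section

theorem segment_subset_convexJoin_singleton_segment {𝕜 E : Type*} [Field 𝕜] [LinearOrder 𝕜]
    [IsStrictOrderedRing 𝕜] [AddCommGroup E] [Module 𝕜 E] {s g w x : E}
    (hx : x ∈ segment 𝕜 s w) : segment 𝕜 g x ⊆ convexJoin 𝕜 {s} (segment 𝕜 g w) :=
  calc segment 𝕜 g x = convexJoin 𝕜 {g} {x} := (convexJoin_singletons g).symm
    _ ⊆ convexJoin 𝕜 {g} (convexJoin 𝕜 {s} {w}) := by
      rw [convexJoin_singletons s]
      exact convexJoin_mono_right (singleton_subset_iff.2 hx)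
    _ = convexJoin 𝕜 {s} (segment 𝕜 g w) := by
      rw [convexJoin_left_comm, convexJoin_singletons g]

theorem guard_sees_kernel_segment_general (Γ : SimplePolygon)
    (S : Pt) (hker : ∀ X ∈ Γ.carrier, Γ.Sees S X)
    (W : Pt)
    (G : Pt) (hGW : Γ.Sees G W) :
    ∀ X ∈ segment ℝ S W, Γ.Sees G X := by
  intro X hX Y hY
  obtain ⟨_, rfl, Q, hQ, hYQ⟩ :=
    mem_convexJoin.1 (segment_subset_convexJoin_singleton_segment hX hY)
  exact hker Q (hGW hQ) hYQ

/-- in a star polygon with kernel point `S`, a guard seeing a boundary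
point `W` sees the whole segment `SW`. -/
theorem guard_sees_kernel_segment (Γ : SimplePolygon)
    (S : Pt) (hS : S ∈ Γ.carrier) (hker : ∀ X ∈ Γ.carrier, Γ.Sees S X)
    (W : Pt) (hW : W ∈ frontier Γ.carrier)
    (G : Pt) (hG : G ∈ Γ.carrier) (hGW : Γ.Sees G W) :
    ∀ X ∈ segment ℝ S W, Γ.Sees G X :=
  guard_sees_kernel_segment_general Γ S hker W G hGW
end
end

section
/- Let Γ be a simple polygon and suppose there is a set S of boundary points of Γ such that the view of each point of S is convex and the union of these views is all of Γ. Then Γ is normal. -/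
open Set

noncomputable section

/-- if some set of boundary points has convex views whose union is the
whole polygon, then the polygon is normal. -/
theorem normal_of_convex_view_cover (Γ : SimplePolygon) (S : Set Pt)
    (hS : S ⊆ frontier Γ.carrier)
    (hconv : ∀ P ∈ S, Convex ℝ (Γ.View P))
    (hcover : (⋃ P ∈ S, Γ.View P) = Γ.carrier) :
    Γ.Normal := by
  intro F hF hcov A hA
  rw [← hcover] at hA
  simp only [mem_iUnion] at hA
  obtain ⟨P, hP, hAP⟩ := hA
  obtain ⟨G, hG, hGP⟩ := hcov P (hS hP)
  refine ⟨G, hG, ?_⟩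
  have hGv : G ∈ Γ.View P := ⟨hF hG, by rwa [SimplePolygon.Sees, segment_symm]⟩
  intro x hx
  exact ((hconv P hP).segment_subset hGv hAP hx).1
end
end

section
/- Let Γ be a simple polygon, F a finite guard set covering the boundary of Γ, S a point seeing all of Γ, and X any point of Γ. Then there exists a guard G ∈ F such that every point of segment SX is seen by G; consequently X is seen by some guard. -/
open Set

noncomputable section

private lemma key_sees (Γ : SimplePolygon) (S : Pt) (hS : S ∈ Γ.carrier)
    (hker : ∀ Y ∈ Γ.carrier, Γ.Sees S Y)
    (G W : Pt) (hGW : Γ.Sees G W)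
    (Y : Pt) (hY : Y ∈ segment ℝ S W) : Γ.Sees G Y := by
  intro P hP
  obtain ⟨u, s, hu, hs, hus, hYdef⟩ := hY
  obtain ⟨a, t, ha, ht, hat, hPdef⟩ := hP
  set b := t * u with hbdef
  have hb0 : 0 ≤ b := mul_nonneg ht hu
  have hb1 : b ≤ 1 := by nlinarith
  by_cases hb : b = 1
  · have ha0 : a = 0 := by nlinarith
    have hts0 : t * s = 0 := by nlinarith
    have hPS : P = S := by
      rw [← hPdef, ← hYdef]
      have h1 : t • (u • S + s • W) = (t * u) • S + (t * s) • W := by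
        rw [smul_add, smul_smul, smul_smul]
      rw [ha0, h1, hts0, ← hbdef, hb]
      simp
    rw [hPS]; exact hS
  · have hb1' : b < 1 := lt_of_le_of_ne hb1 hb
    have hden : (0 : ℝ) < 1 - b := by linarith
    set Q := (a / (1 - b)) • G + (t * s / (1 - b)) • W with hQdef
    have hQmem : Q ∈ segment ℝ G W := by
      refine ⟨a / (1 - b), t * s / (1 - b), div_nonneg ha hden.le,
        div_nonneg (mul_nonneg ht hs) hden.le, ?_, rfl⟩
      field_simp
      nlinarith
    have hQΓ : Q ∈ Γ.carrier := hGW hQmem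
    have hPseg : P ∈ segment ℝ S Q := by
      refine ⟨b, 1 - b, hb0, by linarith, by ring, ?_⟩
      rw [← hPdef, ← hYdef, hQdef]
      have e1 : (1 - b) • ((a / (1 - b)) • G + (t * s / (1 - b)) • W)
          = a • G + (t * s) • W := by
        rw [smul_add, smul_smul, smul_smul, mul_div_cancel₀ _ hden.ne',
          mul_div_cancel₀ _ hden.ne']
      rw [e1]
      have e2 : t • (u • S + s • W) = (t * u) • S + (t * s) • W := by
        rw [smul_add, smul_smul, smul_smul]
      rw [e2, ← hbdef]
      abel
    exact hker Q hQΓ hPseg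

/-- if `F` covers the boundary and `S` sees all of the polygon, then for
every `X` in the polygon some guard sees the whole segment `SX`; in particular `X` is
seen by some guard. -/
theorem guard_sees_segment_of_kernel (Γ : SimplePolygon) (F : Set Pt)
    (hF : F ⊆ Γ.carrier) (hFfin : F.Finite)
    (hwalls : Γ.Covers F (frontier Γ.carrier))
    (S : Pt) (hS : S ∈ Γ.carrier) (hker : ∀ Y ∈ Γ.carrier, Γ.Sees S Y)
    (X : Pt) (hX : X ∈ Γ.carrier) :
    ∃ G ∈ F, (∀ Y ∈ segment ℝ S X, Γ.Sees G Y) ∧ Γ.Sees G X := by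
  classical
  -- choose a direction from S (towards X, or arbitrary if X = S)
  set v : Pt := if X = S then EuclideanSpace.single 0 (1 : ℝ) else X - S with hv
  have hvne : v ≠ 0 := by
    rw [hv]; split_ifs with h
    · intro h0
      have := congrArg (fun f : Pt => f 0) h0
      simp [EuclideanSpace.single_apply] at this
    · exact sub_ne_zero.mpr h
  set T := {t : ℝ | 0 ≤ t ∧ S + t • v ∈ Γ.carrier} with hT
  have h0T : (0 : ℝ) ∈ T := ⟨le_refl 0, by simpa using hS⟩
  -- T is bounded above
  obtain ⟨C, hC⟩ := Γ.compact.isBounded.exists_norm_le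
  have hvpos : (0 : ℝ) < ‖v‖ := norm_pos_iff.mpr hvne
  have hbdd : BddAbove T := by
    refine ⟨(C + ‖S‖) / ‖v‖, fun t ht => ?_⟩
    obtain ⟨ht0, htmem⟩ := ht
    have h1 : ‖S + t • v‖ ≤ C := hC _ htmem
    have h2 : ‖t • v‖ ≤ ‖S + t • v‖ + ‖S‖ := by
      calc ‖t • v‖ = ‖S + t • v - S‖ := by rw [add_sub_cancel_left]
        _ ≤ ‖S + t • v‖ + ‖S‖ := norm_sub_le _ _
    have h3 : t * ‖v‖ ≤ C + ‖S‖ := by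
      rw [norm_smul, Real.norm_eq_abs, abs_of_nonneg ht0] at h2
      linarith
    exact (le_div_iff₀ hvpos).mpr h3
  -- T is closed
  have hTclosed : IsClosed T := by
    have : T = Ici (0 : ℝ) ∩ (fun t : ℝ => S + t • v) ⁻¹' Γ.carrier := by
      ext t; simp [hT, mem_Ici]
    rw [this]
    exact isClosed_Ici.inter (Γ.compact.isClosed.preimage
      (continuous_const.add (continuous_id.smul continuous_const)))
  set ts := sSup T with hts
  have htsT : ts ∈ T := hTclosed.csSup_mem ⟨0, h0T⟩ hbdd
  set W := S + ts • v with hW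
  have hWΓ : W ∈ Γ.carrier := htsT.2
  have hts0 : 0 ≤ ts := htsT.1
  -- W lies on the boundary
  have hWfr : W ∈ frontier Γ.carrier := by
    constructor
    · exact subset_closure hWΓ
    · intro hint
      obtain ⟨ε, hε, hball⟩ := Metric.mem_nhds_iff.mp (mem_interior_iff_mem_nhds.mp hint)
      have hδ : (0 : ℝ) < ε / (2 * ‖v‖) := by positivity
      have hmem : S + (ts + ε / (2 * ‖v‖)) • v ∈ Metric.ball W ε := by
        rw [Metric.mem_ball, dist_eq_norm]
        have : S + (ts + ε / (2 * ‖v‖)) • v - W = (ε / (2 * ‖v‖)) • v := by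
          rw [hW]; rw [add_smul]; abel
        rw [this, norm_smul, Real.norm_eq_abs, abs_of_nonneg hδ.le]
        rw [div_mul_eq_mul_div, mul_comm (2 : ℝ) ‖v‖, ← div_div,
          mul_div_cancel_right₀ _ hvpos.ne']
        linarith
      have : ts + ε / (2 * ‖v‖) ∈ T := ⟨by linarith, hball hmem⟩
      have := le_csSup hbdd this
      linarith
  -- X lies on segment S W
  have hXseg : X ∈ segment ℝ S W := by
    by_cases hXS : X = S
    · rw [hXS]; exact left_mem_segment ℝ S W
    · have hv' : v = X - S := by rw [hv, if_neg hXS]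
      have h1T : (1 : ℝ) ∈ T := ⟨zero_le_one, by rw [hv']; simpa using hX⟩
      have h1ts : (1 : ℝ) ≤ ts := le_csSup hbdd h1T
      have htspos : (0 : ℝ) < ts := lt_of_lt_of_le one_pos h1ts
      rw [segment_eq_image']
      refine ⟨1 / ts, ⟨by positivity, by rw [div_le_one htspos]; exact h1ts⟩, ?_⟩
      have : W - S = ts • v := by rw [hW]; abel
      show S + (1 / ts) • (W - S) = X
      rw [this, smul_smul, one_div, inv_mul_cancel₀ htspos.ne', one_smul, hv']
      abel
  obtain ⟨G, hGF, hGW⟩ := hwalls W hWfr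
  have hsub : segment ℝ S X ⊆ segment ℝ S W :=
    (convex_segment S W).segment_subset (left_mem_segment ℝ S W) hXseg
  exact ⟨G, hGF, fun Y hY => key_sees Γ S hS hker G W hGW Y (hsub hY),
    key_sees Γ S hS hker G W hGW X hXseg⟩
end
end
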